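/- arXiv:2512.22773 — 3 statements merged into one kernel-verified Lean document; each statement's English description precedes it below -/
import Mathlib

section
/- For every natural number m ≥ 1, a binomial random variable X ~ Binom(m, 3/4) satisfies P(X > m/2) > 1/2; that is, ∑_{k : k > m/2} C(m, k) (3/4)^k (1/4)^{m−k} > 1/2. -/
/-!
Put weights `w k = C(m,k) 3^k`, which sum to `4^m`; the claim is that the weight of `k > m/2`
exceeds that of `k ≤ m/2`. Reflecting `k ↦ m - k` turns the lower half into
`∑_{j ≥ m - ⌊m/2⌋} C(m,j) 3^(m-j)`, dominated termwise by the upper half since `m - j < j`.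
For odd `m` this is already strict. For even `m = 2n` the reflected lower half carries the extra
central term `C(2n,n) 3^n`, which is absorbed by the slack `C(2n,n+1) (3^(n+1) - 3^(n-1))` of the
term `j = n + 1`, because `C(2n,n) ≤ 2 C(2n,n+1)` and `3^2 - 1 > 2 * 3`.
-/

open Finset

namespace Nat

theorem sum_range_choose_mul_pow_reflect (q : ℕ) {m n : ℕ} (hn : n ≤ m) :
    ∑ k ∈ range (n + 1), m.choose k * q ^ k =
      ∑ j ∈ Ico (m - n) (m + 1), m.choose j * q ^ (m - j) := by
  have h := sum_Ico_reflect (fun j => m.choose j * q ^ (m - j)) 0 (by omega : n + 1 ≤ m + 1)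
  rw [show m + 1 - (n + 1) = m - n by omega, Nat.sub_zero] at h
  rw [← h, range_eq_Ico]
  refine sum_congr rfl fun k hk => ?_
  rw [mem_Ico] at hk
  rw [choose_symm (by omega), Nat.sub_sub_self (by omega)]

theorem choose_le_two_mul_choose_succ {n : ℕ} (hn : 0 < n) :
    (2 * n).choose n ≤ 2 * (2 * n).choose (n + 1) := by
  have h := choose_succ_right_eq (2 * n) n
  rw [show 2 * n - n = n by omega] at h
  nlinarith

theorem choose_mul_pow_add_lt {q n : ℕ} (hq : 3 ≤ q) (hn : 0 < n) :
    (2 * n).choose n * q ^ n + (2 * n).choose (n + 1) * q ^ (n - 1) <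
      (2 * n).choose (n + 1) * q ^ (n + 1) := by
  obtain ⟨n, rfl⟩ : ∃ n', n = n' + 1 := ⟨n - 1, by omega⟩
  have hc := choose_le_two_mul_choose_succ hn
  have hpos : 0 < (2 * (n + 1)).choose (n + 1 + 1) := choose_pos (by omega)
  set c := (2 * (n + 1)).choose (n + 1 + 1)
  set d := (2 * (n + 1)).choose (n + 1)
  have key : d * q + c < c * (q * q) := by
    calc d * q + c ≤ 2 * c * q + c := by gcongr
      _ < 2 * c * q + c * q := by gcongr; exact lt_mul_of_one_lt_right hpos (by omega)
      _ = c * (3 * q) := by ring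
      _ ≤ c * (q * q) := by gcongr
  have hp : 0 < q ^ n := by positivity
  calc d * q ^ (n + 1) + c * q ^ (n + 1 - 1) = (d * q + c) * q ^ n := by
        rw [Nat.add_sub_cancel, pow_succ]; ring
    _ < c * (q * q) * q ^ n := Nat.mul_lt_mul_of_pos_right key hp
    _ = c * q ^ (n + 1 + 1) := by ring

theorem sum_range_choose_mul_pow_lt_of_even {q n : ℕ} (hq : 3 ≤ q) (hn : 0 < n) :
    ∑ k ∈ range (n + 1), (2 * n).choose k * q ^ k <
      ∑ k ∈ Ico (n + 1) (2 * n + 1), (2 * n).choose k * q ^ k := by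
  rw [sum_range_choose_mul_pow_reflect q (by omega), show 2 * n - n = n by omega,
    sum_eq_sum_Ico_succ_bot (show n < 2 * n + 1 by omega),
    sum_eq_sum_Ico_succ_bot (show n + 1 < 2 * n + 1 by omega),
    sum_eq_sum_Ico_succ_bot (show n + 1 < 2 * n + 1 by omega),
    show 2 * n - n = n by omega, show 2 * n - (n + 1) = n - 1 by omega]
  have hcentral := choose_mul_pow_add_lt hq hn
  have htail : ∑ j ∈ Ico (n + 1 + 1) (2 * n + 1), (2 * n).choose j * q ^ (2 * n - j) ≤
      ∑ j ∈ Ico (n + 1 + 1) (2 * n + 1), (2 * n).choose j * q ^ j := by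
    refine sum_le_sum fun j hj => ?_
    rw [mem_Ico] at hj
    exact Nat.mul_le_mul_left _ (Nat.pow_le_pow_right (by omega) (by omega))
  omega

theorem sum_range_choose_mul_pow_lt_of_odd {q : ℕ} (hq : 1 < q) (n : ℕ) :
    ∑ k ∈ range (n + 1), (2 * n + 1).choose k * q ^ k <
      ∑ k ∈ Ico (n + 1) (2 * n + 1 + 1), (2 * n + 1).choose k * q ^ k := by
  rw [sum_range_choose_mul_pow_reflect q (by omega), show 2 * n + 1 - n = n + 1 by omega]
  refine sum_lt_sum_of_nonempty (nonempty_Ico.mpr (by omega)) fun j hj => ?_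
  rw [mem_Ico] at hj
  exact Nat.mul_lt_mul_of_pos_left (Nat.pow_lt_pow_right hq (by omega)) (choose_pos (by omega))

theorem sum_range_choose_mul_pow_lt {q m : ℕ} (hq : 3 ≤ q) (hm : 0 < m) :
    ∑ k ∈ range (m / 2 + 1), m.choose k * q ^ k <
      ∑ k ∈ Ico (m / 2 + 1) (m + 1), m.choose k * q ^ k := by
  obtain ⟨n, rfl | rfl⟩ := even_or_odd' m
  · rw [show 2 * n / 2 = n by omega]
    exact sum_range_choose_mul_pow_lt_of_even hq (by omega)
  · rw [show (2 * n + 1) / 2 = n by omega]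
    exact sum_range_choose_mul_pow_lt_of_odd (by omega) n

theorem sum_range_choose_mul_pow (q m : ℕ) :
    ∑ k ∈ range (m + 1), m.choose k * q ^ k = (q + 1) ^ m := by
  rw [add_pow]
  exact sum_congr rfl fun k _ => by rw [one_pow, mul_one, Nat.cast_id, mul_comm]

end Nat

theorem choose_mul_three_quarters_pow_mul_quarter_pow {m k : ℕ} (hk : k ≤ m) :
    (m.choose k : ℝ) * (3 / 4) ^ k * (1 / 4) ^ (m - k) = (m.choose k * 3 ^ k : ℕ) / 4 ^ m := by
  rw [← Nat.sub_add_cancel hk, pow_add, Nat.add_sub_cancel, div_pow, one_div_pow]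
  push_cast
  field_simp

theorem filter_range_half_lt_eq_Ico (m : ℕ) :
    (range (m + 1)).filter (fun k : ℕ => (m : ℝ) / 2 < k) = Ico (m / 2 + 1) (m + 1) := by
  ext k
  rw [mem_filter, mem_range, mem_Ico, div_lt_iff₀ two_pos]
  norm_cast
  omega

/-- For every `m ≥ 1`, a binomial random variable `X ~ Binom(m, 3/4)` satisfies
`P(X > m/2) > 1/2`. -/
theorem binomial_three_quarters_median (m : ℕ) (hm : 1 ≤ m) :
    (1 : ℝ) / 2 <
      ∑ k ∈ Finset.range (m + 1),
        (if (m : ℝ) / 2 < (k : ℝ) then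
          (m.choose k : ℝ) * (3 / 4) ^ k * (1 / 4) ^ (m - k) else 0) := by
  have hupper : ∑ k ∈ range (m + 1),
      (if (m : ℝ) / 2 < (k : ℝ) then (m.choose k : ℝ) * (3 / 4) ^ k * (1 / 4) ^ (m - k) else 0) =
        (∑ k ∈ Ico (m / 2 + 1) (m + 1), m.choose k * 3 ^ k : ℕ) / 4 ^ m := by
    rw [← sum_filter, filter_range_half_lt_eq_Ico, Nat.cast_sum, sum_div]
    exact sum_congr rfl fun k hk =>
      choose_mul_three_quarters_pow_mul_quarter_pow (by rw [mem_Ico] at hk; omega)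
  have htotal : ∑ k ∈ range (m / 2 + 1), m.choose k * 3 ^ k +
      ∑ k ∈ Ico (m / 2 + 1) (m + 1), m.choose k * 3 ^ k = 4 ^ m := by
    rw [sum_range_add_sum_Ico _ (by omega), Nat.sum_range_choose_mul_pow]
  have hlt := Nat.sum_range_choose_mul_pow_lt le_rfl hm
  rw [hupper, lt_div_iff₀ (by positivity), one_div, inv_mul_lt_iff₀ two_pos]
  exact_mod_cast (by omega : 4 ^ m < 2 * ∑ k ∈ Ico (m / 2 + 1) (m + 1), m.choose k * 3 ^ k)
end

section
/- Let a, b > 0 be real constants and let π₁, π₂ ≥ 0 with π₁ + π₂ = 1. For a natural number n ≥ 2, set Lₙ = (log n)/n and define Gₙ(t) = π₁·[(a·Lₙ)^t (b·Lₙ)^{1−t} + (1 − a·Lₙ)^t (1 − b·Lₙ)^{1−t}] + π₂·[(b·Lₙ)^t (a·Lₙ)^{1−t} + (1 − b·Lₙ)^t (1 − a·Lₙ)^{1−t}] for t ∈ [0,1]. Then (1/Lₙ)·(1 − inf_{t ∈ [0,1]} Gₙ(t)) converges, as n → ∞, to sup_{t ∈ [0,1]} [π₁·(t·a + (1−t)·b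 − a^t b^{1−t}) + π₂·(t·b + (1−t)·a − b^t a^{1−t})]. -/
/-!
With `L = log n / n`, the cross terms factor as `(a L)^t (b L)^{1-t} = L a^t b^{1-t}`, and the
remaining terms satisfy `1 - (1 - a L)^t (1 - b L)^{1-t} = (t a + (1 - t) b) L + O(L²)` uniformly
in `t ∈ [0, 1]`: weighted AM–GM gives the lower bound and `exp u ≥ 1 + u` together with
`log (1 - x) ≥ -x - 2x²` the upper one. Hence `L⁻¹ (1 - Gₙ)` converges uniformly on `[0, 1]` to the
limiting exponent, and so does its supremum, which is `L⁻¹ (1 - inf Gₙ)`.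
-/

open Filter Topology Real Set

lemma neg_sub_two_mul_sq_le_log_one_sub {x : ℝ} (hx : |x| ≤ 1 / 2) :
    -x - 2 * x ^ 2 ≤ log (1 - x) := by
  have h := abs_log_sub_add_sum_range_le (show |x| < 1 by linarith) 1
  simp only [Finset.range_one, Finset.sum_singleton, zero_add, pow_one, Nat.cast_zero,
    div_one] at h
  have hrem : |x| ^ 2 / (1 - |x|) ≤ 2 * x ^ 2 := by
    rw [div_le_iff₀ (by linarith), sq_abs]
    nlinarith [sq_nonneg x]
  linarith [neg_abs_le (x + log (1 - x))]

lemma abs_one_sub_rpow_mul_rpow_sub_le {x y t : ℝ} (hx : |x| ≤ 1 / 2) (hy : |y| ≤ 1 / 2)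
    (ht₀ : 0 ≤ t) (ht₁ : t ≤ 1) :
    |1 - (1 - x) ^ t * (1 - y) ^ (1 - t) - (t * x + (1 - t) * y)| ≤ 2 * (x ^ 2 + y ^ 2) := by
  obtain ⟨hx₁, hx₂⟩ := abs_le.1 hx
  obtain ⟨hy₁, hy₂⟩ := abs_le.1 hy
  have hx' : 0 < 1 - x := by linarith
  have hy' : 0 < 1 - y := by linarith
  have hamgm : (1 - x) ^ t * (1 - y) ^ (1 - t) ≤ t * (1 - x) + (1 - t) * (1 - y) :=
    geom_mean_le_arith_mean2_weighted ht₀ (by linarith) hx'.le hy'.le (by ring)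
  have hexp : t * log (1 - x) + (1 - t) * log (1 - y) + 1 ≤ (1 - x) ^ t * (1 - y) ^ (1 - t) := by
    rw [rpow_def_of_pos hx', rpow_def_of_pos hy', ← exp_add, mul_comm t, mul_comm (1 - t)]
    exact add_one_le_exp _
  have hlog_x := mul_le_mul_of_nonneg_left (neg_sub_two_mul_sq_le_log_one_sub hx) ht₀
  have hlog_y := mul_le_mul_of_nonneg_left (neg_sub_two_mul_sq_le_log_one_sub hy)
    (sub_nonneg.2 ht₁)
  rw [abs_le]
  constructor
  · nlinarith [sq_nonneg x, sq_nonneg y]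
  · nlinarith [sq_nonneg x, sq_nonneg y]

lemma mul_rpow_mul_rpow_one_sub {a b L : ℝ} (ha : 0 ≤ a) (hb : 0 ≤ b) (hL : 0 < L) (t : ℝ) :
    (a * L) ^ t * (b * L) ^ (1 - t) = L * (a ^ t * b ^ (1 - t)) := by
  rw [mul_rpow ha hL.le, mul_rpow hb hL.le, mul_mul_mul_comm, ← rpow_add hL, add_sub_cancel,
    rpow_one]
  ring

lemma mul_one_sub_csInf {S : Set ℝ} (hS : S.Nonempty) (hS' : BddBelow S) {c : ℝ} (hc : 0 ≤ c) :
    c * (1 - sInf S) = sSup ((fun x => c * (1 - x)) '' S) :=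
  Antitone.map_csInf_of_continuousAt (by fun_prop)
    (fun _ _ h => mul_le_mul_of_nonneg_left (sub_le_sub_left h 1) hc) hS hS'

lemma abs_csSup_image_sub_le {α : Type*} {S : Set α} (hS : S.Nonempty) {f g : α → ℝ}
    (hf : BddAbove (f '' S)) {ε : ℝ} (h : ∀ x ∈ S, |g x - f x| ≤ ε) :
    |sSup (g '' S) - sSup (f '' S)| ≤ ε := by
  have hg : BddAbove (g '' S) := by
    obtain ⟨M, hM⟩ := hf
    refine ⟨M + ε, forall_mem_image.2 fun x hx => ?_⟩
    linarith [(abs_le.1 (h x hx)).2, hM (mem_image_of_mem f hx)]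
  rw [abs_le]
  constructor
  · refine neg_le_sub_iff_le_add.2 (csSup_le (hS.image f) (forall_mem_image.2 fun x hx => ?_))
    linarith [(abs_le.1 (h x hx)).1, le_csSup hg (mem_image_of_mem g hx)]
  · refine sub_le_iff_le_add'.2 (csSup_le (hS.image g) (forall_mem_image.2 fun x hx => ?_))
    linarith [(abs_le.1 (h x hx)).2, le_csSup hf (mem_image_of_mem f hx)]

lemma tendsto_csSup_image_of_abs_sub_le {ι α : Type*} {l : Filter ι} {S : Set α}
    (hS : S.Nonempty) {F : ι → α → ℝ} {f : α → ℝ} (hf : BddAbove (f '' S)) {δ : ι → ℝ}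
    (hδ : Tendsto δ l (𝓝 0)) (hF : ∀ᶠ i in l, ∀ x ∈ S, |F i x - f x| ≤ δ i) :
    Tendsto (fun i => sSup (F i '' S)) l (𝓝 (sSup (f '' S))) := by
  rw [tendsto_iff_dist_tendsto_zero]
  refine squeeze_zero' (Eventually.of_forall fun _ => dist_nonneg) ?_ hδ
  filter_upwards [hF] with i hi
  exact abs_csSup_image_sub_le hS hf hi

lemma tendsto_log_div_self_natCast :
    Tendsto (fun n : ℕ => log n / n) atTop (𝓝 0) :=
  isLittleO_log_id_atTop.tendsto_div_nhds_zero.comp tendsto_natCast_atTop_atTop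

/-- The Chernoff coefficient `∑ₓ Bern(p)(x)^t Bern(q)(x)^{1-t}`. -/
noncomputable def bernoulliChernoffCoeff (p q t : ℝ) : ℝ :=
  p ^ t * q ^ (1 - t) + (1 - p) ^ t * (1 - q) ^ (1 - t)

/-- The order-`t` Chernoff divergence `-log ∑ₖ Poi(a)(k)^t Poi(b)(k)^{1-t}`. -/
noncomputable def poissonChernoffDiv (a b t : ℝ) : ℝ :=
  t * a + (1 - t) * b - a ^ t * b ^ (1 - t)

lemma bernoulliChernoffCoeff_nonneg {p q : ℝ} (hp₀ : 0 ≤ p) (hp₁ : p ≤ 1) (hq₀ : 0 ≤ q)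
    (hq₁ : q ≤ 1) (t : ℝ) : 0 ≤ bernoulliChernoffCoeff p q t := by
  have : 0 ≤ 1 - p := sub_nonneg.2 hp₁
  have : 0 ≤ 1 - q := sub_nonneg.2 hq₁
  unfold bernoulliChernoffCoeff
  positivity

lemma abs_rescaled_bernoulliChernoffCoeff_sub_le {a b L t : ℝ} (ha : 0 ≤ a) (hb : 0 ≤ b)
    (hL : 0 < L) (haL : a * L ≤ 1 / 2) (hbL : b * L ≤ 1 / 2) (ht₀ : 0 ≤ t) (ht₁ : t ≤ 1) :
    |L⁻¹ * (1 - bernoulliChernoffCoeff (a * L) (b * L) t) - poissonChernoffDiv a b t|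
      ≤ 2 * (a ^ 2 + b ^ 2) * L := by
  have h := abs_one_sub_rpow_mul_rpow_sub_le (x := a * L) (y := b * L)
    (by rwa [abs_of_nonneg (by positivity)]) (by rwa [abs_of_nonneg (by positivity)]) ht₀ ht₁
  have hsplit : L⁻¹ * (1 - bernoulliChernoffCoeff (a * L) (b * L) t) - poissonChernoffDiv a b t
      = L⁻¹ * (1 - (1 - a * L) ^ t * (1 - b * L) ^ (1 - t) - (t * (a * L) + (1 - t) * (b * L))) := by
    rw [bernoulliChernoffCoeff, poissonChernoffDiv, mul_rpow_mul_rpow_one_sub ha hb hL]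
    field_simp
    ring
  rw [hsplit, abs_mul, abs_of_pos (inv_pos.2 hL), inv_mul_le_iff₀ hL]
  linarith

lemma abs_rescaled_mixture_sub_le {a b π₁ π₂ L t : ℝ} (ha : 0 ≤ a) (hb : 0 ≤ b)
    (hπ₁ : 0 ≤ π₁) (hπ₂ : 0 ≤ π₂) (hπ : π₁ + π₂ = 1)
    (hL : 0 < L) (haL : a * L ≤ 1 / 2) (hbL : b * L ≤ 1 / 2) (ht₀ : 0 ≤ t) (ht₁ : t ≤ 1) :
    |L⁻¹ * (1 - (π₁ * bernoulliChernoffCoeff (a * L) (b * L) t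
        + π₂ * bernoulliChernoffCoeff (b * L) (a * L) t))
      - (π₁ * poissonChernoffDiv a b t + π₂ * poissonChernoffDiv b a t)|
      ≤ 2 * (a ^ 2 + b ^ 2) * L := by
  set ε := 2 * (a ^ 2 + b ^ 2) * L
  have hab := abs_rescaled_bernoulliChernoffCoeff_sub_le ha hb hL haL hbL ht₀ ht₁
  have hba := abs_rescaled_bernoulliChernoffCoeff_sub_le hb ha hL hbL haL ht₀ ht₁
  rw [add_comm (b ^ 2)] at hba
  calc _ = |π₁ * (L⁻¹ * (1 - bernoulliChernoffCoeff (a * L) (b * L) t) - poissonChernoffDiv a b t)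
          + π₂ * (L⁻¹ * (1 - bernoulliChernoffCoeff (b * L) (a * L) t)
            - poissonChernoffDiv b a t)| := by
        congr 1
        linear_combination (-L⁻¹) * hπ
    _ ≤ π₁ * ε + π₂ * ε := by
        refine (abs_add_le _ _).trans (add_le_add ?_ ?_) <;>
          rw [abs_mul, abs_of_nonneg ‹_›] <;> gcongr
    _ = ε := by rw [← add_mul, hπ, one_mul]

lemma inv_mul_one_sub_csInf_mixture {a b π₁ π₂ L : ℝ} (ha : 0 ≤ a) (hb : 0 ≤ b)
    (hπ₁ : 0 ≤ π₁) (hπ₂ : 0 ≤ π₂) (hL : 0 < L) (haL : a * L ≤ 1 / 2) (hbL : b * L ≤ 1 / 2) :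
    L⁻¹ * (1 - sInf ((fun t => π₁ * bernoulliChernoffCoeff (a * L) (b * L) t
        + π₂ * bernoulliChernoffCoeff (b * L) (a * L) t) '' Icc 0 1))
      = sSup ((fun t => L⁻¹ * (1 - (π₁ * bernoulliChernoffCoeff (a * L) (b * L) t
        + π₂ * bernoulliChernoffCoeff (b * L) (a * L) t))) '' Icc 0 1) := by
  have haL₀ : 0 ≤ a * L := by positivity
  have hbL₀ : 0 ≤ b * L := by positivity
  have hbdd : BddBelow ((fun t => π₁ * bernoulliChernoffCoeff (a * L) (b * L) t
      + π₂ * bernoulliChernoffCoeff (b * L) (a * L) t) '' Icc 0 1) := by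
    refine ⟨0, forall_mem_image.2 fun t _ => add_nonneg ?_ ?_⟩
    · exact mul_nonneg hπ₁ (bernoulliChernoffCoeff_nonneg haL₀ (by linarith) hbL₀ (by linarith) t)
    · exact mul_nonneg hπ₂ (bernoulliChernoffCoeff_nonneg hbL₀ (by linarith) haL₀ (by linarith) t)
  rw [mul_one_sub_csInf ((nonempty_Icc.2 zero_le_one).image _) hbdd (inv_nonneg.2 hL.le),
    image_image]

/-- The rescaled Chernoff–Hellinger divergence between the Bernoulli distribution vectors
`((Bern(a·Lₙ), Bern(b·Lₙ)), (Bern(b·Lₙ), Bern(a·Lₙ)))` with prior `(π₁, π₂)`, where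
`Lₙ = (log n)/n`, converges to the Abbe–Sandon Chernoff–Hellinger divergence
`sup_{t ∈ [0,1]} [π₁·(t·a + (1−t)·b − a^t b^{1−t}) + π₂·(t·b + (1−t)·a − b^t a^{1−t})]`. -/
theorem CH_divergence_limit (a b : ℝ) (ha : 0 < a) (hb : 0 < b)
    (π₁ π₂ : ℝ) (hπ₁ : 0 ≤ π₁) (hπ₂ : 0 ≤ π₂) (hπ : π₁ + π₂ = 1) :
    Tendsto (fun n : ℕ =>
        ((n : ℝ) / Real.log n) *
          (1 - sInf ((fun t : ℝ =>
            π₁ * ((a * (Real.log n / n)) ^ t * (b * (Real.log n / n)) ^ (1 - t)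
              + (1 - a * (Real.log n / n)) ^ t * (1 - b * (Real.log n / n)) ^ (1 - t))
            + π₂ * ((b * (Real.log n / n)) ^ t * (a * (Real.log n / n)) ^ (1 - t)
              + (1 - b * (Real.log n / n)) ^ t * (1 - a * (Real.log n / n)) ^ (1 - t)))
            '' Set.Icc (0 : ℝ) 1)))
      atTop
      (nhds (sSup ((fun t : ℝ =>
        π₁ * (t * a + (1 - t) * b - a ^ t * b ^ (1 - t))
          + π₂ * (t * b + (1 - t) * a - b ^ t * a ^ (1 - t))) '' Set.Icc (0 : ℝ) 1))) := by
  set L : ℕ → ℝ := fun n => log n / n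
  have hf : BddAbove ((fun t => π₁ * poissonChernoffDiv a b t + π₂ * poissonChernoffDiv b a t)
      '' Icc 0 1) :=
    (isCompact_Icc.image (by unfold poissonChernoffDiv; fun_prop (disch := positivity))).bddAbove
  have hpos : ∀ᶠ n : ℕ in atTop, 0 < L n := by
    filter_upwards [eventually_ge_atTop 2] with n hn
    exact div_pos (log_pos (by exact_mod_cast hn)) (by positivity)
  have hsmall (c : ℝ) : ∀ᶠ n : ℕ in atTop, c * L n ≤ 1 / 2 :=
    (tendsto_log_div_self_natCast.const_mul c).eventually
      (eventually_le_nhds (by norm_num : c * 0 < 1 / 2))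
  refine Tendsto.congr' ?_ (tendsto_csSup_image_of_abs_sub_le (nonempty_Icc.2 zero_le_one) hf
    (F := fun n t => (L n)⁻¹ * (1 - (π₁ * bernoulliChernoffCoeff (a * L n) (b * L n) t
      + π₂ * bernoulliChernoffCoeff (b * L n) (a * L n) t)))
    (by simpa only [mul_zero] using tendsto_log_div_self_natCast.const_mul (2 * (a ^ 2 + b ^ 2)))
    ?_)
  · filter_upwards [hpos, hsmall a, hsmall b] with n hL haL hbL
    rw [← inv_div]
    exact (inv_mul_one_sub_csInf_mixture ha.le hb.le hπ₁ hπ₂ hL haL hbL).symm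
  · filter_upwards [hpos, hsmall a, hsmall b] with n hL haL hbL t ⟨ht₀, ht₁⟩
    exact abs_rescaled_mixture_sub_le ha.le hb.le hπ₁ hπ₂ hπ hL haL hbL ht₀ ht₁
end

section
/- For any real constants a, b with 0 < a < 1 and 0 < b < 1, and for every real t, the function value a^t b^{1−t} + b^t a^{1−t} + (1 − a)^t (1 − b)^{1−t} + (1 − b)^t (1 − a)^{1−t} is at least its value at t = 1/2; that is, 2√(a·b) + 2√((1 − a)(1 − b)) ≤ a^t b^{1−t} + b^t a^{1−t} + (1 − a)^t (1 − b)^{1−t} + (1 − b)^t (1 − a)^{1−t} for all t ∈ ℝ. -/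
open Real

/- The two cross terms `x^t y^{1-t}` and `y^t x^{1-t}` multiply to `x y` whatever `t` is, so by
AM-GM their sum is at least `2√(xy)`, with equality at `t = 1/2`. Apply this to `(a, b)` and to
`(1 - a, 1 - b)`. -/

lemma two_mul_sqrt_mul_le_add {p q : ℝ} (hp : 0 ≤ p) (hq : 0 ≤ q) : 2 * √(p * q) ≤ p + q := by
  rw [sqrt_mul hp]
  nlinarith [sq_nonneg (√p - √q), sq_sqrt hp, sq_sqrt hq]

lemma rpow_mul_rpow_one_sub_mul_rpow_mul_rpow_one_sub {x y : ℝ} (hx : 0 ≤ x) (hy : 0 ≤ y)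
    (t : ℝ) : (x ^ t * y ^ (1 - t)) * (y ^ t * x ^ (1 - t)) = x * y := by
  have hsum : t + (1 - t) ≠ 0 := by norm_num
  calc (x ^ t * y ^ (1 - t)) * (y ^ t * x ^ (1 - t))
      = x ^ (t + (1 - t)) * y ^ (t + (1 - t)) := by
        rw [rpow_add' hx hsum, rpow_add' hy hsum]; ring
    _ = x * y := by norm_num

lemma two_mul_sqrt_mul_le_rpow_mul_rpow_one_sub_add {x y : ℝ} (hx : 0 ≤ x) (hy : 0 ≤ y)
    (t : ℝ) : 2 * √(x * y) ≤ x ^ t * y ^ (1 - t) + y ^ t * x ^ (1 - t) := by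
  rw [← rpow_mul_rpow_one_sub_mul_rpow_mul_rpow_one_sub hx hy t]
  exact two_mul_sqrt_mul_le_add (by positivity) (by positivity)

/-- For `0 < a < 1`, `0 < b < 1` and any real `t`, the function
`t ↦ a^t b^{1−t} + b^t a^{1−t} + (1−a)^t (1−b)^{1−t} + (1−b)^t (1−a)^{1−t}` is at least its
value at `t = 1/2`, namely `2√(ab) + 2√((1−a)(1−b))`. -/
theorem symmetric_mgf_min_at_half (a b : ℝ) (ha0 : 0 < a) (ha1 : a < 1)
    (hb0 : 0 < b) (hb1 : b < 1) (t : ℝ) :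
    2 * Real.sqrt (a * b) + 2 * Real.sqrt ((1 - a) * (1 - b)) ≤
      a ^ t * b ^ (1 - t) + b ^ t * a ^ (1 - t)
        + (1 - a) ^ t * (1 - b) ^ (1 - t) + (1 - b) ^ t * (1 - a) ^ (1 - t) := by
  have hab := two_mul_sqrt_mul_le_rpow_mul_rpow_one_sub_add ha0.le hb0.le t
  have hab' := two_mul_sqrt_mul_le_rpow_mul_rpow_one_sub_add
    (sub_nonneg.mpr ha1.le) (sub_nonneg.mpr hb1.le) t
  linarith
end
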